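/- Let μ > 0, α > −1/2 and x ∈ ℂ. Then e_{μ+α}(x) = (1/B(α + 1/2, μ)) ∫_{−1}^{1} e_α(x t) |t|^{2α} (1−t)^{μ−1} (1+t)^{μ} dt. -/

import Mathlib

open MeasureTheory
open scoped BigOperators Nat

/-- Generalized factorial `γ_μ(n)`: `γ_μ(0) = 1`,
`γ_μ(n+1) = (n + 1 + 2μ θ_{n+1}) γ_μ(n)` where `θ_k = 1` if `k` is odd, `0` if even. -/
noncomputable def genGamma (μ : ℝ) : ℕ → ℝ
  | 0 => 1
  | n + 1 => ((n : ℝ) + 1 + 2 * μ * (if (n + 1) % 2 = 1 then (1 : ℝ) else 0)) * genGamma μ n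

/-- Generalized exponential function `e_μ(z) = Σ_{n≥0} z^n / γ_μ(n)`. -/
noncomputable def genExp (μ : ℝ) (z : ℂ) : ℂ :=
  ∑' n : ℕ, z ^ n / (genGamma μ n : ℂ)

/-- Generalized Hermite polynomial
`H_n^μ(x) = n! Σ_{k=0}^{⌊n/2⌋} (-1)^k (2x)^{n-2k} / (k! γ_μ(n-2k))`. -/
noncomputable def genHermite (μ : ℝ) (n : ℕ) (x : ℂ) : ℂ :=
  (n ! : ℂ) * ∑ k ∈ Finset.range (n / 2 + 1),
    (-1) ^ k * (2 * x) ^ (n - 2 * k) / ((k ! : ℂ) * ((genGamma μ (n - 2 * k) : ℝ) : ℂ))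

/-- Dunkl operator `(D_μ f)(x) = f'(x) + (μ/x)(f(x) - f(-x))`. -/
noncomputable def dunkl (μ : ℝ) (f : ℝ → ℂ) (x : ℝ) : ℂ :=
  deriv f x + ((μ / x : ℝ) : ℂ) * (f x - f (-x))

/-- Euler beta function `B(a,b) = Γ(a)Γ(b)/Γ(a+b)`. -/
noncomputable def realBeta (a b : ℝ) : ℝ :=
  Real.Gamma a * Real.Gamma b / Real.Gamma (a + b)

/-! The moments of the weight `w(t) = |t|^{2α} (1-t)^{μ-1} (1+t)^μ` are Beta values: folding
`(-1, 1)` onto `(0, 1)` turns `t^n w(t)` into `2 t^{2k+2α} (1-t²)^{μ-1}` with `k = ⌊(n+1)/2⌋`,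
and `s = t²` gives `∫_{-1}^1 t^n w = B(k + α + 1/2, μ)`. Since `Γ(a+1) = a Γ(a)`, these moments
satisfy `γ_{μ+α}(n) B(k + α + 1/2, μ) = γ_α(n) B(α + 1/2, μ)`, so integrating the series of
`e_α(xt)` term by term against `w` yields `B(α + 1/2, μ) e_{μ+α}(x)`. -/

open Set
open scoped Interval

section SquareSubstitution

variable {E : Type*} [NormedAddCommGroup E] [NormedSpace ℝ E]

theorem image_sq_Ioo_zero_one : (fun t : ℝ => t ^ 2) '' Ioo 0 1 = Ioo 0 1 := by
  ext s
  constructor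
  · rintro ⟨t, ⟨ht0, ht1⟩, rfl⟩
    exact ⟨by positivity, by nlinarith⟩
  · rintro ⟨hs0, hs1⟩
    exact ⟨√s, ⟨Real.sqrt_pos.2 hs0, (Real.sqrt_lt' one_pos).2 (by simpa using hs1)⟩,
      Real.sq_sqrt hs0.le⟩

theorem hasDerivWithinAt_sq_Ioo_zero_one :
    ∀ t ∈ Ioo (0 : ℝ) 1, HasDerivWithinAt (fun t : ℝ => t ^ 2) (2 * t) (Ioo 0 1) t :=
  fun t _ => by simpa using (hasDerivAt_pow 2 t).hasDerivWithinAt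

theorem injOn_sq_Ioo_zero_one : InjOn (fun t : ℝ => t ^ 2) (Ioo 0 1) :=
  (pow_left_strictMonoOn₀ two_ne_zero).injOn.mono fun _ ht => le_of_lt ht.1

theorem integrableOn_Ioo_comp_sq_iff (g : ℝ → E) :
    IntegrableOn (fun t => (2 * t) • g (t ^ 2)) (Ioo (0 : ℝ) 1) ↔ IntegrableOn g (Ioo 0 1) := by
  have h := integrableOn_image_iff_integrableOn_abs_deriv_smul
    measurableSet_Ioo hasDerivWithinAt_sq_Ioo_zero_one injOn_sq_Ioo_zero_one g
  rw [image_sq_Ioo_zero_one] at h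
  rw [h]
  refine integrableOn_congr_fun (fun t ht => ?_) measurableSet_Ioo
  simp [abs_of_pos ht.1]

theorem integral_Ioo_comp_sq (g : ℝ → E) :
    ∫ t in Ioo (0 : ℝ) 1, (2 * t) • g (t ^ 2) = ∫ s in Ioo 0 1, g s := by
  have h := integral_image_eq_integral_abs_deriv_smul
    measurableSet_Ioo hasDerivWithinAt_sq_Ioo_zero_one injOn_sq_Ioo_zero_one g
  rw [image_sq_Ioo_zero_one] at h
  rw [h]
  refine setIntegral_congr_fun measurableSet_Ioo (fun t ht => ?_)
  simp [abs_of_pos ht.1]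

end SquareSubstitution

theorem ofReal_rpow_mul_one_sub_rpow {x : ℝ} (hx : x ∈ Icc (0 : ℝ) 1) (a b : ℝ) :
    ((x ^ (a - 1) * (1 - x) ^ (b - 1) : ℝ) : ℂ) =
      (x : ℂ) ^ ((a : ℂ) - 1) * (1 - (x : ℂ)) ^ ((b : ℂ) - 1) := by
  rw [Complex.ofReal_mul, Complex.ofReal_cpow hx.1, Complex.ofReal_cpow (sub_nonneg.2 hx.2)]
  push_cast
  rfl

theorem intervalIntegrable_rpow_mul_one_sub_rpow {a b : ℝ} (ha : 0 < a) (hb : 0 < b) :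
    IntervalIntegrable (fun x : ℝ => x ^ (a - 1) * (1 - x) ^ (b - 1)) volume 0 1 := by
  have h := (Complex.betaIntegral_convergent (u := a) (v := b) (by simpa) (by simpa)).norm
  refine h.congr (fun x hx => ?_)
  rw [uIoc_of_le zero_le_one] at hx
  have hx' : x ∈ Icc (0 : ℝ) 1 := Ioc_subset_Icc_self hx
  rw [← ofReal_rpow_mul_one_sub_rpow hx', Complex.norm_real, Real.norm_of_nonneg]
  exact mul_nonneg (Real.rpow_nonneg hx'.1 _) (Real.rpow_nonneg (sub_nonneg.2 hx'.2) _)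

theorem intervalIntegral_rpow_mul_one_sub_rpow {a b : ℝ} (ha : 0 < a) (hb : 0 < b) :
    ∫ x in (0 : ℝ)..1, x ^ (a - 1) * (1 - x) ^ (b - 1) = realBeta a b := by
  have h : Complex.betaIntegral a b =
      ((∫ x in (0 : ℝ)..1, x ^ (a - 1) * (1 - x) ^ (b - 1) : ℝ) : ℂ) := by
    rw [Complex.betaIntegral, ← intervalIntegral.integral_ofReal]
    refine intervalIntegral.integral_congr (fun x hx => ?_)
    rw [uIcc_of_le zero_le_one] at hx
    exact (ofReal_rpow_mul_one_sub_rpow hx a b).symm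
  rw [show realBeta a b = ProbabilityTheory.beta a b from rfl,
    ProbabilityTheory.beta_eq_betaIntegralReal a b ha hb, h, Complex.ofReal_re]

theorem smul_comp_sq_rpow_mul_one_sub_rpow {p b t : ℝ} (ht : 0 < t) :
    (2 * t) • ((t ^ 2) ^ ((p + 1) / 2 - 1) * (1 - t ^ 2) ^ (b - 1)) =
      2 * (t ^ p * (1 - t ^ 2) ^ (b - 1)) := by
  have hexp : ((2 : ℕ) : ℝ) * ((p + 1) / 2 - 1) = p - 1 := by push_cast; ring
  rw [smul_eq_mul, ← Real.rpow_natCast_mul ht.le, hexp, Real.rpow_sub_one ht.ne']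
  field_simp

theorem intervalIntegrable_rpow_mul_one_sub_sq_rpow {p b : ℝ} (hp : -1 < p) (hb : 0 < b) :
    IntervalIntegrable (fun t : ℝ => t ^ p * (1 - t ^ 2) ^ (b - 1)) volume 0 1 := by
  have h := intervalIntegrable_rpow_mul_one_sub_rpow (a := (p + 1) / 2) (by linarith) hb
  rw [intervalIntegrable_iff_integrableOn_Ioo_of_le zero_le_one] at h ⊢
  rw [← integrableOn_Ioo_comp_sq_iff, integrableOn_congr_fun
    (fun t ht => smul_comp_sq_rpow_mul_one_sub_rpow ht.1) measurableSet_Ioo] at h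
  exact IntegrableOn.congr_fun (h.const_mul (1 / 2)) (fun t _ => by ring) measurableSet_Ioo

theorem intervalIntegral_rpow_mul_one_sub_sq_rpow {p b : ℝ} (hp : -1 < p) (hb : 0 < b) :
    ∫ t in (0 : ℝ)..1, t ^ p * (1 - t ^ 2) ^ (b - 1) = realBeta ((p + 1) / 2) b / 2 := by
  have h := integral_Ioo_comp_sq fun s : ℝ => s ^ ((p + 1) / 2 - 1) * (1 - s) ^ (b - 1)
  rw [setIntegral_congr_fun measurableSet_Ioo
      (fun t ht => smul_comp_sq_rpow_mul_one_sub_rpow ht.1),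
    integral_const_mul, ← integral_Ioc_eq_integral_Ioo, ← integral_Ioc_eq_integral_Ioo,
    ← intervalIntegral.integral_of_le zero_le_one, ← intervalIntegral.integral_of_le zero_le_one,
    intervalIntegral_rpow_mul_one_sub_rpow (by linarith) hb] at h
  linarith

theorem realBeta_add_one_mul {a b : ℝ} (ha : 0 < a) (hb : 0 < b) :
    (a + b) * realBeta (a + 1) b = a * realBeta a b := by
  have hΓ : Real.Gamma (a + b) ≠ 0 := (Real.Gamma_pos_of_pos (by linarith)).ne'
  rw [realBeta, realBeta, Real.Gamma_add_one ha.ne', add_right_comm,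
    Real.Gamma_add_one (by linarith)]
  field_simp

theorem intervalIntegral_eq_integral_add_comp_neg {E : Type*} [NormedAddCommGroup E]
    [NormedSpace ℝ E] {f : ℝ → E} {a : ℝ} (ha : 0 ≤ a)
    (hf : IntervalIntegrable f volume (-a) a) :
    ∫ x in -a..a, f x = ∫ x in 0..a, (f x + f (-x)) := by
  have hneg : IntervalIntegrable f volume (-a) 0 :=
    hf.mono_set (uIcc_subset_uIcc left_mem_uIcc (by simp [uIcc_of_le, ha]))
  have hpos : IntervalIntegrable f volume 0 a :=
    hf.mono_set (uIcc_subset_uIcc (by simp [uIcc_of_le, ha]) right_mem_uIcc)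
  have hneg' : IntervalIntegrable (fun x => f (-x)) volume 0 a := by
    simpa using ((IntervalIntegrable.iff_comp_neg).mp hneg).symm
  rw [← intervalIntegral.integral_add_adjacent_intervals hneg hpos,
    intervalIntegral.integral_add hpos hneg', intervalIntegral.integral_comp_neg, neg_zero,
    add_comm]

section SonineWeight

noncomputable def sonineWeight (α μ t : ℝ) : ℝ :=
  |t| ^ (2 * α) * (1 - t) ^ (μ - 1) * (1 + t) ^ μ

variable {α μ : ℝ}

theorem sonineWeight_eq {t : ℝ} (hμ : μ ≠ 0) (ht : t ∈ Icc (-1) 1) :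
    sonineWeight α μ t = |t| ^ (2 * α) * (1 - t ^ 2) ^ (μ - 1) * (1 + t) := by
  have h₁ : 0 ≤ 1 - t := by linarith [ht.2]
  have h₂ : 0 ≤ 1 + t := by linarith [ht.1]
  have hsplit : (1 + t) ^ μ = (1 + t) ^ (μ - 1) * (1 + t) := by
    conv_lhs => rw [← sub_add_cancel μ 1]
    rw [Real.rpow_add' h₂ (by simpa), Real.rpow_one]
  rw [sonineWeight, hsplit, show 1 - t ^ 2 = (1 - t) * (1 + t) by ring, Real.mul_rpow h₁ h₂]
  ring

theorem pow_mul_sonineWeight_add_neg {t : ℝ} (hμ : μ ≠ 0) (ht : t ∈ Ioc 0 1) (n : ℕ) :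
    t ^ n * sonineWeight α μ t + (-t) ^ n * sonineWeight α μ (-t) =
      2 * (t ^ ((2 * ((n + 1) / 2) : ℕ) + 2 * α) * (1 - t ^ 2) ^ (μ - 1)) := by
  have ht' : t ∈ Icc (-1) 1 := ⟨by linarith [ht.1], ht.2⟩
  have hnt : -t ∈ Icc (-1) 1 := ⟨by linarith [ht.2], by linarith [ht.1]⟩
  rw [sonineWeight_eq hμ ht', sonineWeight_eq hμ hnt, abs_neg, neg_sq, abs_of_pos ht.1,
    Real.rpow_add ht.1, Real.rpow_natCast]
  rcases n.even_or_odd' with ⟨m, rfl | rfl⟩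
  · rw [show (2 * m + 1) / 2 = m by omega, Even.neg_pow ⟨m, by ring⟩]
    ring
  · rw [show (2 * m + 1 + 1) / 2 = m + 1 by omega, Odd.neg_pow ⟨m, rfl⟩]
    ring

theorem intervalIntegrable_sonineWeight (hμ : 0 < μ) (hα : -(1 / 2) < α) :
    IntervalIntegrable (sonineWeight α μ) volume (-1) 1 := by
  have hbeta := intervalIntegrable_rpow_mul_one_sub_sq_rpow (p := 2 * α) (by linarith) hμ
  have hpos : IntervalIntegrable (sonineWeight α μ) volume 0 1 := by
    refine (hbeta.mul_continuousOn (g := fun t => 1 + t) (by fun_prop)).congr (fun t ht => ?_)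
    rw [uIoc_of_le zero_le_one] at ht
    rw [sonineWeight_eq hμ.ne' ⟨by linarith [ht.1], ht.2⟩, abs_of_pos ht.1]
  have hneg : IntervalIntegrable (fun t => sonineWeight α μ (-t)) volume 0 1 := by
    refine (hbeta.mul_continuousOn (g := fun t => 1 - t) (by fun_prop)).congr (fun t ht => ?_)
    rw [uIoc_of_le zero_le_one] at ht
    rw [sonineWeight_eq hμ.ne' ⟨by linarith [ht.2], by linarith [ht.1]⟩, abs_neg, neg_sq,
      abs_of_pos ht.1]
    ring
  refine IntervalIntegrable.trans (b := 0) ?_ hpos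
  simpa using ((IntervalIntegrable.iff_comp_neg).mp hneg).symm

theorem intervalIntegral_pow_mul_sonineWeight (hμ : 0 < μ) (hα : -(1 / 2) < α) (n : ℕ) :
    ∫ t in (-1 : ℝ)..1, t ^ n * sonineWeight α μ t =
      realBeta (((n + 1) / 2 : ℕ) + (α + 1 / 2)) μ := by
  have hf : IntervalIntegrable (fun t => t ^ n * sonineWeight α μ t) volume (-1) 1 :=
    (intervalIntegrable_sonineWeight hμ hα).continuousOn_mul (by fun_prop)
  have hp : (-1 : ℝ) < (2 * ((n + 1) / 2) : ℕ) + 2 * α := by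
    linarith [Nat.cast_nonneg (α := ℝ) (2 * ((n + 1) / 2))]
  have hfold : ∫ t in (0 : ℝ)..1, (t ^ n * sonineWeight α μ t + (-t) ^ n * sonineWeight α μ (-t))
      = ∫ t in (0 : ℝ)..1, 2 * (t ^ ((2 * ((n + 1) / 2) : ℕ) + 2 * α) * (1 - t ^ 2) ^ (μ - 1)) :=
    intervalIntegral.integral_congr_ae <| .of_forall fun t ht =>
      pow_mul_sonineWeight_add_neg hμ.ne' (by rwa [uIoc_of_le zero_le_one] at ht) n
  rw [intervalIntegral_eq_integral_add_comp_neg zero_le_one hf, hfold,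
    intervalIntegral.integral_const_mul, intervalIntegral_rpow_mul_one_sub_sq_rpow hp hμ]
  push_cast
  ring_nf

end SonineWeight

theorem genGamma_two_mul_add_one (μ : ℝ) (m : ℕ) :
    genGamma μ (2 * m + 1) = (2 * m + 1 + 2 * μ) * genGamma μ (2 * m) := by
  rw [genGamma, if_pos (by omega)]
  push_cast
  ring

theorem genGamma_two_mul_add_two (μ : ℝ) (m : ℕ) :
    genGamma μ (2 * m + 2) = (2 * m + 2) * genGamma μ (2 * m + 1) := by
  rw [genGamma, if_neg (by omega)]
  push_cast
  ring

theorem pow_mul_factorial_le_genGamma {μ : ℝ} (hμ : -(1 / 2) < μ) (n : ℕ) :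
    min 1 (1 + 2 * μ) ^ n * n ! ≤ genGamma μ n := by
  induction n with
  | zero => simp [genGamma]
  | succ n ih =>
    set δ := min 1 (1 + 2 * μ)
    have hδ : 0 < δ := lt_min one_pos (by linarith)
    have hδ₁ : δ ≤ 1 := min_le_left _ _
    have hδ₂ : δ ≤ 1 + 2 * μ := min_le_right _ _
    have hn : (0 : ℝ) ≤ n := n.cast_nonneg
    have hfactor :
        δ * (n + 1) ≤ n + 1 + 2 * μ * (if (n + 1) % 2 = 1 then (1 : ℝ) else 0) := by
      split_ifs <;> nlinarith
    rw [genGamma, Nat.factorial_succ, Nat.cast_mul, pow_succ]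
    calc δ ^ n * δ * (((n + 1 : ℕ) : ℝ) * n !) = (δ * (n + 1)) * (δ ^ n * n !) := by
          push_cast; ring
      _ ≤ _ := mul_le_mul hfactor ih (by positivity) (by nlinarith)

theorem genGamma_pos {μ : ℝ} (hμ : -(1 / 2) < μ) (n : ℕ) : 0 < genGamma μ n := by
  have : 0 < min 1 (1 + 2 * μ) := lt_min one_pos (by linarith)
  exact (by positivity : (0 : ℝ) < _).trans_le (pow_mul_factorial_le_genGamma hμ n)

theorem summable_pow_div_genGamma {μ : ℝ} (hμ : -(1 / 2) < μ) {r : ℝ} (hr : 0 ≤ r) :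
    Summable fun n => r ^ n / genGamma μ n := by
  set δ := min 1 (1 + 2 * μ)
  have hδ : 0 < δ := lt_min one_pos (by linarith)
  refine .of_nonneg_of_le (fun n => div_nonneg (pow_nonneg hr n) (genGamma_pos hμ n).le)
    (fun n => ?_) (Real.summable_pow_div_factorial (r / δ))
  rw [div_pow, div_div]
  gcongr
  exact pow_mul_factorial_le_genGamma hμ n

theorem genGamma_add_mul_realBeta {μ α : ℝ} (hμ : 0 < μ) (hα : -(1 / 2) < α) (n : ℕ) :
    genGamma (μ + α) n * realBeta (((n + 1) / 2 : ℕ) + (α + 1 / 2)) μ =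
      genGamma α n * realBeta (α + 1 / 2) μ := by
  induction n with
  | zero => simp [genGamma]
  | succ n ih =>
    rcases n.even_or_odd' with ⟨m, rfl | rfl⟩
    · rw [show (2 * m + 1) / 2 = m by omega] at ih
      have hB := realBeta_add_one_mul (a := m + (α + 1 / 2))
        (by linarith [m.cast_nonneg (α := ℝ)]) hμ
      rw [show (2 * m + 1 + 1) / 2 = m + 1 by omega, genGamma_two_mul_add_one,
        genGamma_two_mul_add_one,
        show ((m + 1 : ℕ) : ℝ) + (α + 1 / 2) = m + (α + 1 / 2) + 1 by push_cast; ring]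
      linear_combination 2 * genGamma (μ + α) (2 * m) * hB + 2 * (m + (α + 1 / 2)) * ih
    · rw [show (2 * m + 1 + 1) / 2 = m + 1 by omega] at ih
      rw [show 2 * m + 1 + 1 = 2 * m + 2 by ring, show (2 * m + 2 + 1) / 2 = m + 1 by omega,
        genGamma_two_mul_add_two, genGamma_two_mul_add_two]
      linear_combination (2 * m + 2 : ℝ) * ih

theorem intervalIntegral_ofReal_pow_mul_sonineWeight {μ α : ℝ} (hμ : 0 < μ)
    (hα : -(1 / 2) < α) (n : ℕ) :
    ∫ t in (-1 : ℝ)..1, (t : ℂ) ^ n * sonineWeight α μ t =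
      ((genGamma α n * realBeta (α + 1 / 2) μ / genGamma (μ + α) n : ℝ) : ℂ) := by
  rw [← genGamma_add_mul_realBeta hμ hα n,
    mul_div_cancel_left₀ _ (genGamma_pos (by linarith) n).ne',
    ← intervalIntegral_pow_mul_sonineWeight hμ hα, ← intervalIntegral.integral_ofReal]
  push_cast
  rfl

theorem hasSum_intervalIntegral_pow_mul {w : ℝ → ℂ} (hw : IntervalIntegrable w volume (-1) 1)
    {c : ℕ → ℂ} (hc : Summable fun n => ‖c n‖) :
    HasSum (fun n => c n * ∫ t in (-1 : ℝ)..1, (t : ℂ) ^ n * w t)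
      (∫ t in (-1 : ℝ)..1, (∑' n, c n * (t : ℂ) ^ n) * w t) := by
  have hpow : ∀ n, ∀ t ∈ Ι (-1 : ℝ) 1, ‖(t : ℂ) ^ n‖ ≤ 1 := fun n t ht => by
    rw [uIoc_of_le (by norm_num)] at ht
    rw [norm_pow, Complex.norm_real]
    exact pow_le_one₀ (norm_nonneg t) (abs_le.2 ⟨ht.1.le, ht.2⟩)
  simp_rw [← intervalIntegral.integral_const_mul]
  refine intervalIntegral.hasSum_integral_of_dominated_convergence (fun n t => ‖c n‖ * ‖w t‖)
    (fun n => ?_) (fun n => .of_forall fun t ht => ?_) (.of_forall fun t _ => hc.mul_right _)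
    ?_ (.of_forall fun t ht => ?_)
  · exact aestronglyMeasurable_const.mul
      ((by fun_prop : Continuous fun t : ℝ => (t : ℂ) ^ n).aestronglyMeasurable.mul
        hw.def'.aestronglyMeasurable)
  · rw [norm_mul, norm_mul]
    gcongr
    exact mul_le_of_le_one_left (norm_nonneg _) (hpow n t ht)
  · simp_rw [tsum_mul_right]
    exact hw.norm.const_mul _
  · have hs : Summable fun n => c n * (t : ℂ) ^ n :=
      .of_norm_bounded hc fun n => by
        rw [norm_mul]
        exact mul_le_of_le_one_right (norm_nonneg _) (hpow n t ht)
    simpa only [mul_assoc] using hs.hasSum.mul_right (w t)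

/-- For `μ > 0`, `α > -1/2`, `x ∈ ℂ`:
`e_{μ+α}(x) = (1/B(α+1/2, μ)) ∫_{-1}^1 e_α(xt) |t|^{2α} (1-t)^{μ-1} (1+t)^μ dt`. -/
theorem genExp_sonine_integral (μ α : ℝ) (hμ : 0 < μ) (hα : -(1/2) < α) (x : ℂ) :
    genExp (μ + α) x =
      ((1 / realBeta (α + 1/2) μ : ℝ) : ℂ) *
        ∫ t in (-1 : ℝ)..1,
          genExp α (x * t) * ((|t| ^ (2 * α) * (1 - t) ^ (μ - 1) * (1 + t) ^ μ : ℝ) : ℂ) := by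
  have hB₀ : realBeta (α + 1 / 2) μ ≠ 0 := (ProbabilityTheory.beta_pos (by linarith) hμ).ne'
  have hw : IntervalIntegrable (fun t => (sonineWeight α μ t : ℂ)) volume (-1) 1 :=
    ⟨(intervalIntegrable_sonineWeight hμ hα).1.ofReal,
      (intervalIntegrable_sonineWeight hμ hα).2.ofReal⟩
  have hc : Summable fun n => ‖x ^ n / (genGamma α n : ℂ)‖ := by
    simpa [abs_of_pos (genGamma_pos hα _)] using summable_pow_div_genGamma hα (norm_nonneg x)
  have hmoment (n : ℕ) :
      x ^ n / (genGamma α n : ℂ) * ∫ t in (-1 : ℝ)..1, (t : ℂ) ^ n * sonineWeight α μ t =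
        realBeta (α + 1 / 2) μ * (x ^ n / genGamma (μ + α) n) := by
    have hγα : (genGamma α n : ℂ) ≠ 0 := Complex.ofReal_ne_zero.2 (genGamma_pos hα n).ne'
    have hγμα : (genGamma (μ + α) n : ℂ) ≠ 0 :=
      Complex.ofReal_ne_zero.2 (genGamma_pos (by linarith) n).ne'
    rw [intervalIntegral_ofReal_pow_mul_sonineWeight hμ hα]
    push_cast
    field_simp
  have hexp (t : ℝ) : ∑' n, x ^ n / (genGamma α n : ℂ) * (t : ℂ) ^ n = genExp α (x * t) := by
    rw [genExp]
    exact tsum_congr fun n => by ring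
  have hsum := hasSum_intervalIntegral_pow_mul hw hc
  simp only [hmoment, hexp] at hsum
  change _ = _ * ∫ t in (-1 : ℝ)..1, genExp α (x * t) * (sonineWeight α μ t : ℂ)
  rw [← hsum.tsum_eq, tsum_mul_left, ← genExp, Complex.ofReal_div, Complex.ofReal_one, one_div,
    inv_mul_cancel_left₀ (Complex.ofReal_ne_zero.2 hB₀)]
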